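/- Let t ≥ 1 and k ∈ ℤ be integers, let S be a finite set of integers, and let F : S → ℂ. Then Σ_{j} cos(2πj/t)·Σ_{m∈S, m≡j̄k (mod t)} F(m) = (μ(t)/t)·Σ_{m∈S} F(m) + (1/(2t))·Σ_{0<|s|≤t/2} [ S(1, sk; t) + S(−1, sk; t) ]·Σ_{m∈S} F(m)·e_t(−sm), where the outer j-sum runs over a reduced residue system modulo t represented by nonzero integers j with −t/2 < j ≤ t/2, and j̄ denotes the inverse of j modulo t. -/

import Mathlib

open Finset

noncomputable section

/-- `invMod x n` is the multiplicative inverse of `x` modulo `n` (as a natural number). -/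
def invMod (x n : ℕ) : ℕ := ((x : ZMod n))⁻¹.val

/-- The multiplicative inverse modulo `n` of an integer `j`. -/
def invModZ (j : ℤ) (n : ℕ) : ℕ := ((j : ZMod n))⁻¹.val

/-- The additive character `e_t(x) = e^{2πix/t}`. -/
def eChar (t : ℕ) (x : ℤ) : ℂ := Complex.exp (2 * Real.pi * Complex.I * (x : ℂ) / (t : ℂ))

/-- The Kloosterman sum `S(a,b;c) = ∑_{j ≤ c, (j,c)=1} e_c(ja + j̄b)`. -/
def kloosterman (a b : ℤ) (c : ℕ) : ℂ :=
  ∑ j ∈ (Finset.Icc 1 c).filter (fun j : ℕ => Nat.Coprime j c),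
    eChar c ((j : ℤ) * a + (invMod j c : ℤ) * b)

/-- A complete set of residues modulo `t` represented by integers `s`
with `-t/2 < s ≤ t/2`, i.e. `0 < |s| ≤ t/2` together with `0`. -/
def halfRes (t : ℕ) : Finset ℤ :=
  Finset.Icc (-(((t - 1) / 2 : ℕ) : ℤ)) (((t / 2 : ℕ) : ℤ))

/-!
Everything is transported to `ZMod t` and its standard additive character `ψ`: `halfRes t` and
`Icc 1 t` are complete residue systems modulo `t`, and `cos (2πj/t) = (ψ j + ψ (-j)) / 2`.
Detecting `m ≡ j̄ k` by orthogonality, `[m ≡ y] = t⁻¹ ∑ₛ ψ (s y) ψ (-s m)`, and summing over `j`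
first turns the `j`-sum into `(S(1, sk; t) + S(-1, sk; t)) / 2`. For `s = 0` this is the
Ramanujan sum `∑_{j unit} ψ j = μ t`: `ψ` maps the units of `ZMod t` onto the primitive `t`-th
roots of unity, and Möbius inversion of `∑_{d ∣ t} ∑_{ζ primitive of order d} ζ = ∑_{ζ^t = 1} ζ
= [t = 1]` gives their sum.
-/

open ZMod ArithmeticFunction
open scoped ArithmeticFunction.Moebius

section Character

variable {t : ℕ} [NeZero t]

lemma eChar_eq_stdAddChar (x : ℤ) : eChar t x = stdAddChar (x : ZMod t) := by
  rw [eChar, stdAddChar_coe]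

lemma cos_eq_stdAddChar (j : ℤ) :
    (Real.cos (2 * Real.pi * (j : ℝ) / (t : ℝ)) : ℂ)
      = (stdAddChar (j : ZMod t) + stdAddChar (-(j : ZMod t))) / 2 := by
  rw [Complex.ofReal_cos, Complex.cos, ← Int.cast_neg, stdAddChar_coe, stdAddChar_coe]
  push_cast
  ring_nf

end Character

section Residues

variable {M : Type*} [AddCommMonoid M] {t : ℕ} [NeZero t]

lemma sum_halfRes_eq_sum_zmod (f : ZMod t → M) :
    ∑ j ∈ halfRes t, f j = ∑ x, f x := by
  refine Finset.sum_nbij' (fun j => (j : ZMod t)) valMinAbs (by simp) ?_ ?_ ?_ (by simp)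
  · intro x _
    have := x.valMinAbs_mem_Ioc
    simp only [halfRes, Finset.mem_Icc, Set.mem_Ioc] at this ⊢
    omega
  · intro j hj
    simp only [halfRes, Finset.mem_Icc] at hj
    refine (valMinAbs_spec _ _).2 ⟨rfl, ?_⟩
    have := NeZero.pos t
    rw [Set.mem_Ioc]
    omega
  · intro x _
    exact coe_valMinAbs x

lemma sum_Icc_eq_sum_zmod (f : ZMod t → M) :
    ∑ j ∈ Icc 1 t, f j = ∑ x, f x := by
  refine Finset.sum_nbij' (fun j => (j : ZMod t)) (fun x => if x = 0 then t else x.val)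
    (by simp) ?_ ?_ ?_ (by simp)
  · intro x _
    have := x.val_lt
    have := NeZero.pos t
    simp only [Finset.mem_Icc]
    split_ifs with h
    · omega
    · have := val_pos.2 h
      omega
  · intro j hj
    simp only [Finset.mem_Icc] at hj
    split_ifs with h
    · exact le_antisymm (Nat.le_of_dvd (by omega) ((natCast_eq_zero_iff j t).1 h)) hj.2
    · have hjt : j ≠ t := by rintro rfl; exact h (natCast_self j)
      rw [val_natCast, Nat.mod_eq_of_lt (by omega)]
  · intro x _
    split_ifs with h <;> simp [h]

lemma sum_zmod_eq_add_sum_halfRes_filter_ne_zero (f : ZMod t → M) :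
    ∑ x, f x = f 0 + ∑ s ∈ (halfRes t).filter (· ≠ 0), f s := by
  have h0 : (0 : ℤ) ∈ halfRes t := by
    simp only [halfRes, Finset.mem_Icc]
    omega
  rw [← sum_halfRes_eq_sum_zmod, filter_ne', ← add_sum_erase _ _ h0, Int.cast_zero]

lemma sum_halfRes_filter_gcd_eq_one (f : ZMod t → M) :
    ∑ j ∈ (halfRes t).filter (fun j : ℤ => Int.gcd j (t : ℤ) = 1), f j
      = ∑ x ∈ univ.filter IsUnit, f x := by
  rw [sum_filter, sum_filter, ← sum_halfRes_eq_sum_zmod]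
  refine sum_congr rfl fun j _ => if_congr ?_ rfl rfl
  rw [coe_int_isUnit_iff_isCoprime, Int.isCoprime_iff_gcd_eq_one, Int.gcd_comm]

lemma sum_Icc_filter_coprime (f : ZMod t → M) :
    ∑ j ∈ (Icc 1 t).filter (fun j : ℕ => Nat.Coprime j t), f j
      = ∑ x ∈ univ.filter IsUnit, f x := by
  rw [sum_filter, sum_filter, ← sum_Icc_eq_sum_zmod]
  exact sum_congr rfl fun j _ => if_congr (isUnit_iff_coprime j t).symm rfl rfl

lemma filter_emod_eq_invModZ_mul (S : Finset ℤ) (j k : ℤ) :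
    S.filter (fun m : ℤ => m % (t : ℤ) = ((invModZ j t : ℤ) * k) % (t : ℤ))
      = S.filter (fun m : ℤ => (m : ZMod t) = (j : ZMod t)⁻¹ * (k : ZMod t)) := by
  refine filter_congr fun m _ => ?_
  rw [← intCast_eq_intCast_iff', invModZ]
  push_cast
  rw [natCast_zmod_val]

end Residues

section Ramanujan

variable {t : ℕ} [NeZero t]

lemma stdAddChar_natCast (i : ℕ) : stdAddChar (i : ZMod t) = stdAddChar (1 : ZMod t) ^ i := by
  rw [← AddChar.map_nsmul_eq_pow, nsmul_one]

lemma isPrimitiveRoot_stdAddChar_one : IsPrimitiveRoot (stdAddChar (1 : ZMod t)) t := by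
  convert Complex.isPrimitiveRoot_exp t (NeZero.ne t) using 1
  rw [← Int.cast_one, stdAddChar_coe]
  push_cast
  ring_nf

lemma image_stdAddChar_univ :
    (univ : Finset (ZMod t)).image stdAddChar = Polynomial.nthRootsFinset t (1 : ℂ) := by
  ext ξ
  rw [mem_image, Polynomial.mem_nthRootsFinset (NeZero.pos t)]
  constructor
  · rintro ⟨x, -, rfl⟩
    rw [← AddChar.map_nsmul_eq_pow, nsmul_eq_mul, natCast_self, zero_mul, AddChar.map_zero_eq_one]
  · intro hξ
    obtain ⟨i, -, rfl⟩ := isPrimitiveRoot_stdAddChar_one.eq_pow_of_pow_eq_one hξ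
    exact ⟨i, mem_univ _, stdAddChar_natCast i⟩

lemma image_stdAddChar_filter_isUnit :
    (univ.filter (IsUnit : ZMod t → Prop)).image stdAddChar = primitiveRoots t ℂ := by
  ext ξ
  rw [mem_image, mem_primitiveRoots (NeZero.pos t),
    isPrimitiveRoot_stdAddChar_one.isPrimitiveRoot_iff]
  constructor
  · rintro ⟨x, hx, rfl⟩
    rw [mem_filter, ← natCast_zmod_val x, isUnit_iff_coprime] at hx
    exact ⟨x.val, x.val_lt, hx.2, by rw [← stdAddChar_natCast, natCast_zmod_val]⟩
  · rintro ⟨i, -, hi, rfl⟩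
    exact ⟨i, mem_filter.2 ⟨mem_univ _, (isUnit_iff_coprime i t).2 hi⟩, stdAddChar_natCast i⟩

lemma sum_nthRootsFinset_one (n : ℕ) :
    ∑ ξ ∈ Polynomial.nthRootsFinset n (1 : ℂ), ξ = if n = 1 then 1 else 0 := by
  rcases Nat.eq_zero_or_pos n with rfl | hn
  · simp
  have : NeZero n := ⟨hn.ne'⟩
  rw [← image_stdAddChar_univ, sum_image fun x _ y _ h => injective_stdAddChar h]
  split_ifs with h1
  · subst h1
    rw [Fintype.sum_subsingleton _ 0, AddChar.map_zero_eq_one]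
  · refine AddChar.sum_eq_zero_of_ne_one fun h => ?_
    refine isPrimitiveRoot_stdAddChar_one.ne_one (lt_of_le_of_ne hn (Ne.symm h1)) ?_
    rw [h, AddChar.one_apply]

lemma sum_primitiveRoots_eq_moebius {n : ℕ} (hn : 0 < n) :
    ∑ ξ ∈ primitiveRoots n ℂ, ξ = μ n := by
  have hsum : ∀ m > 0, ∑ d ∈ m.divisors, ∑ ξ ∈ primitiveRoots d ℂ, ξ
      = if m = 1 then (1 : ℂ) else 0 := by
    intro m _
    rw [← sum_biUnion fun x _ y _ hxy => IsPrimitiveRoot.disjoint hxy,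
      ← IsPrimitiveRoot.nthRoots_one_eq_biUnion_primitiveRoots, sum_nthRootsFinset_one]
  rw [← sum_eq_iff_sum_mul_moebius_eq.1 hsum n hn,
    sum_eq_single_of_mem (n, 1) (Nat.mem_divisorsAntidiagonal.2 ⟨mul_one n, hn.ne'⟩)]
  · simp
  · rintro ⟨a, b⟩ hab hne
    rw [Nat.mem_divisorsAntidiagonal] at hab
    rw [if_neg, mul_zero]
    rintro rfl
    exact hne (by simp [← hab.1])

lemma sum_filter_isUnit_stdAddChar :
    ∑ x ∈ univ.filter (IsUnit : ZMod t → Prop), stdAddChar x = μ t := by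
  rw [← sum_primitiveRoots_eq_moebius (NeZero.pos t), ← image_stdAddChar_filter_isUnit,
    sum_image fun x _ y _ h => injective_stdAddChar h]

end Ramanujan

section Kloosterman

variable {t : ℕ} [NeZero t]

def kloostermanZMod (a b : ZMod t) : ℂ :=
  ∑ x ∈ univ.filter IsUnit, stdAddChar (x * a + x⁻¹ * b)

lemma kloosterman_eq_kloostermanZMod (a b : ℤ) :
    kloosterman a b t = kloostermanZMod (a : ZMod t) (b : ZMod t) := by
  rw [kloosterman, kloostermanZMod, ← sum_Icc_filter_coprime]
  refine sum_congr rfl fun j _ => ?_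
  rw [eChar_eq_stdAddChar, invMod]
  push_cast
  rw [natCast_zmod_val]

lemma kloostermanZMod_one_zero : kloostermanZMod (1 : ZMod t) 0 = μ t := by
  simp only [kloostermanZMod, mul_one, mul_zero, add_zero, sum_filter_isUnit_stdAddChar]

lemma kloostermanZMod_neg_one_zero : kloostermanZMod (-1 : ZMod t) 0 = μ t := by
  rw [← sum_filter_isUnit_stdAddChar, kloostermanZMod]
  exact sum_nbij' Neg.neg Neg.neg (by simp) (by simp) (by simp) (by simp) (by simp)

end Kloosterman

section Identity

variable {t : ℕ} [NeZero t]

lemma sum_filter_intCast_eq_sum_stdAddChar (S : Finset ℤ) (F : ℤ → ℂ) (y : ZMod t) :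
    ∑ m ∈ S.filter (fun m : ℤ => (m : ZMod t) = y), F m
      = (t : ℂ)⁻¹ * ∑ s : ZMod t,
          stdAddChar (s * y) * ∑ m ∈ S, F m * stdAddChar (-(s * (m : ZMod t))) := by
  have horth : ∀ m : ℤ, ∑ s : ZMod t, stdAddChar (s * y) * stdAddChar (-(s * (m : ZMod t)))
      = if (m : ZMod t) = y then (t : ℂ) else 0 := by
    intro m
    simp_rw [← AddChar.map_add_eq_mul, ← mul_neg, ← mul_add,
      AddChar.sum_mulShift _ (isPrimitive_stdAddChar t), ZMod.card, add_neg_eq_zero, eq_comm,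
      Nat.cast_ite, Nat.cast_zero]
  simp_rw [mul_sum, sum_filter]
  rw [sum_comm]
  refine sum_congr rfl fun m _ => ?_
  simp_rw [mul_left_comm _ (F m), ← mul_sum, horth]
  have ht : (t : ℂ) ≠ 0 := NeZero.ne _
  split_ifs
  · field_simp
  · simp

lemma sum_filter_isUnit_cos_mul_stdAddChar_eq_kloostermanZMod (s k : ZMod t) :
    ∑ x ∈ univ.filter IsUnit, (stdAddChar x + stdAddChar (-x)) / 2 * stdAddChar (s * (x⁻¹ * k))
      = (kloostermanZMod 1 (s * k) + kloostermanZMod (-1) (s * k)) / 2 := by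
  rw [kloostermanZMod, kloostermanZMod, ← sum_add_distrib, sum_div]
  refine sum_congr rfl fun x _ => ?_
  rw [add_div, add_mul, div_mul_eq_mul_div, div_mul_eq_mul_div, ← AddChar.map_add_eq_mul,
    ← AddChar.map_add_eq_mul]
  ring_nf

lemma sum_cos_mul_sum_filter_eq_sum_kloostermanZMod (k : ZMod t) (S : Finset ℤ) (F : ℤ → ℂ) :
    ∑ x ∈ univ.filter IsUnit, (stdAddChar x + stdAddChar (-x)) / 2 *
        ∑ m ∈ S.filter (fun m : ℤ => (m : ZMod t) = x⁻¹ * k), F m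
      = (2 * t : ℂ)⁻¹ * ∑ s : ZMod t,
          (kloostermanZMod 1 (s * k) + kloostermanZMod (-1) (s * k)) *
            ∑ m ∈ S, F m * stdAddChar (-(s * (m : ZMod t))) := by
  set M : ZMod t → ℂ := fun s => ∑ m ∈ S, F m * stdAddChar (-(s * (m : ZMod t)))
  calc _ = ∑ x ∈ univ.filter IsUnit, ∑ s : ZMod t, (t : ℂ)⁻¹ *
          ((stdAddChar x + stdAddChar (-x)) / 2 * stdAddChar (s * (x⁻¹ * k))) * M s := by
        refine sum_congr rfl fun x _ => ?_
        rw [sum_filter_intCast_eq_sum_stdAddChar, mul_sum, mul_sum]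
        exact sum_congr rfl fun s _ => by ring
    _ = ∑ s : ZMod t, (t : ℂ)⁻¹ *
          ((kloostermanZMod 1 (s * k) + kloostermanZMod (-1) (s * k)) / 2) * M s := by
        rw [sum_comm]
        refine sum_congr rfl fun s _ => ?_
        rw [← sum_mul, ← mul_sum, sum_filter_isUnit_cos_mul_stdAddChar_eq_kloostermanZMod]
    _ = _ := by
        rw [mul_sum]
        exact sum_congr rfl fun s _ => by ring

end Identity

theorem statement13 (t : ℕ) (ht : 1 ≤ t) (k : ℤ) (S : Finset ℤ) (F : ℤ → ℂ) :
    ∑ j ∈ (halfRes t).filter (fun j : ℤ => Int.gcd j (t : ℤ) = 1),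
      (Real.cos (2 * Real.pi * (j : ℝ) / (t : ℝ)) : ℂ) *
        ∑ m ∈ S.filter (fun m : ℤ => m % (t : ℤ) = ((invModZ j t : ℤ) * k) % (t : ℤ)), F m
    = ((ArithmeticFunction.moebius t : ℤ) : ℂ) / (t : ℂ) * ∑ m ∈ S, F m
      + (1 / (2 * (t : ℂ))) *
          ∑ s ∈ (halfRes t).filter (· ≠ 0),
            (kloosterman 1 (s * k) t + kloosterman (-1) (s * k) t) *
              ∑ m ∈ S, F m * eChar t (-(s * m)) := by
  have : NeZero t := ⟨by omega⟩
  simp_rw [cos_eq_stdAddChar, filter_emod_eq_invModZ_mul]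
  rw [sum_halfRes_filter_gcd_eq_one (fun x => (stdAddChar x + stdAddChar (-x)) / 2 *
      ∑ m ∈ S.filter (fun m : ℤ => (m : ZMod t) = x⁻¹ * (k : ZMod t)), F m),
    sum_cos_mul_sum_filter_eq_sum_kloostermanZMod, sum_zmod_eq_add_sum_halfRes_filter_ne_zero]
  simp only [zero_mul, kloostermanZMod_one_zero, kloostermanZMod_neg_one_zero, neg_zero,
    AddChar.map_zero_eq_one, mul_one, kloosterman_eq_kloostermanZMod, eChar_eq_stdAddChar]
  push_cast
  have ht' : (t : ℂ) ≠ 0 := NeZero.ne _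
  field_simp
  ring
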